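/- arXiv:2304.10989 — 2 statements merged into one kernel-verified Lean document; each statement's English description precedes it below -/
import Mathlib

section
/- The following statements are equivalent: (i) for all i = 1, …, d−1, (r_i, t_{d−i}) ∈ S; (ii) AP_S = {(0,0)} ∪ {(r_i, t_{d−i}) : 1 ≤ i ≤ d−1}; (iii) AP_S has exactly d elements; (iv) the exceptional set E_S is empty. (These conditions characterize the arithmetic Cohen–Macaulayness of the projective monomial curve associated to A.) -/
/-!
Every `p ∈ S` has `p.1 ∈ S₁`, `p.2 ∈ S₂` and `d ∣ p.1 + p.2`, so by the Apery property it is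
`(r_i, t_j) + k (d, 0) + m (0, d)` with `i ≡ -j (mod d)`. Condition (i) thus says that `S` is the
whole of `{(x, y) : x ∈ S₁, y ∈ S₂, d ∣ x + y}`; then `AP_S` is read off directly, and
`E_S = ∅` because `p - (d, d)` satisfies the three membership conditions.

The map `p ↦ p.1 mod d` sends `AP_S` onto `ℤ/d` (above `r_i` take the point of `S` with least
second coordinate), so `|AP_S| = d` exactly when it is injective. Injectivity gives (i), since
the points of `AP_S` with first coordinate `r_i` and with second coordinate `t_{d-i}` lie over
the same residue. Conversely, `E_S = ∅` says that `P - (d, 0), P - (0, d) ∈ S` force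
`P - (d, d) ∈ S`; two points `(x, w + d)`, `(x + k d, w)` of `S` then give `(x, w) ∈ S` by
descending along the first coordinate, which rules out two points of `AP_S` over one residue.
-/

open scoped BigOperators

namespace SumsetsCurve

/-- The `s`-fold sumset of `A = {a 0, …, a (n-1)}`:
all sums of `s` elements of `A` (with `0A = {0}`). -/
def sumset (n : ℕ) (a : ℕ → ℕ) (s : ℕ) : Set ℕ :=
  {x | ∃ f : Fin s → ℕ, (∀ i, f i < n) ∧ x = ∑ i, a (f i)}

/-- The numerical semigroup (additive submonoid of ℕ) generated by `B`. -/
def numSG (B : Set ℕ) : Set ℕ := (AddSubmonoid.closure B : AddSubmonoid ℕ)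

/-- `S₁`, the numerical semigroup generated by `A`. -/
def S1 (n : ℕ) (a : ℕ → ℕ) : Set ℕ := numSG {x | ∃ i < n, a i = x}

/-- `S₂`, the numerical semigroup generated by `d - A`. -/
def S2 (n d : ℕ) (a : ℕ → ℕ) : Set ℕ := numSG {x | ∃ i < n, d - a i = x}

/-- The conductor of `S ⊆ ℕ`: the least `c` with `c + ℕ ⊆ S`. -/
noncomputable def conductor (S : Set ℕ) : ℕ := sInf {c | ∀ m, c ≤ m → m ∈ S}

/-- The genus of `S ⊆ ℕ`: the number of gaps `|ℕ \ S|`. -/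
noncomputable def genus (S : Set ℕ) : ℕ := Set.ncard {x : ℕ | x ∉ S}

/-- `C = S ∩ [0, conductor S - 2]` (the inequality is taken in ℤ). -/
def Cpart (S : Set ℕ) : Set ℕ := {x | x ∈ S ∧ (x : ℤ) ≤ (conductor S : ℤ) - 2}

/-- The decomposition `sA = C₁ ⊔ [c₁, sd - c₂] ⊔ (sd - C₂)` of the Structure Theorem,
viewed inside ℤ. -/
def structDecomp (n d : ℕ) (a : ℕ → ℕ) (s : ℕ) : Prop :=
  (Nat.cast '' sumset n a s : Set ℤ)
      = (Nat.cast '' Cpart (S1 n a))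
        ∪ Set.Icc ((conductor (S1 n a) : ℤ)) ((s * d : ℤ) - (conductor (S2 n d a) : ℤ))
        ∪ ((fun c => (s * d : ℤ) - c) '' (Nat.cast '' Cpart (S2 n d a)))
    ∧ Disjoint (Nat.cast '' Cpart (S1 n a) : Set ℤ)
        (Set.Icc ((conductor (S1 n a) : ℤ)) ((s * d : ℤ) - (conductor (S2 n d a) : ℤ)))
    ∧ Disjoint (Nat.cast '' Cpart (S1 n a) : Set ℤ)
        ((fun c => (s * d : ℤ) - c) '' (Nat.cast '' Cpart (S2 n d a)))
    ∧ Disjoint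
        (Set.Icc ((conductor (S1 n a) : ℤ)) ((s * d : ℤ) - (conductor (S2 n d a) : ℤ)))
        ((fun c => (s * d : ℤ) - c) '' (Nat.cast '' Cpart (S2 n d a)))

/-- `σ(A)`: the least `σ` such that the Structure Theorem decomposition holds
for all `s ≥ σ`. -/
noncomputable def sigmaA (n d : ℕ) (a : ℕ → ℕ) : ℕ :=
  sInf {σ | ∀ s, σ ≤ s → structDecomp n d a s}

/-- `r(A)`: the least `r` such that `|sA| = sd + 1 - g₁ - g₂` for all `s ≥ r`
(the regularity of the Hilbert function of `k[C_A]`). -/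
noncomputable def rA (n d : ℕ) (a : ℕ → ℕ) : ℕ :=
  sInf {r | ∀ s, r ≤ s →
    ((sumset n a s).ncard : ℤ)
      = (s : ℤ) * d + 1 - genus (S1 n a) - genus (S2 n d a)}

/-- The homogeneous semigroup `S ⊆ ℕ²` generated by `{(a, d-a) : a ∈ A}`. -/
def SS (n d : ℕ) (a : ℕ → ℕ) : Set (ℕ × ℕ) :=
  (AddSubmonoid.closure {p : ℕ × ℕ | ∃ i < n, p = (a i, d - a i)} : AddSubmonoid (ℕ × ℕ))

/-- The Apery set `AP_S = {p ∈ S : p - (0,d) ∉ S, p - (d,0) ∉ S}`. -/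
def APS (n d : ℕ) (a : ℕ → ℕ) : Set (ℕ × ℕ) :=
  {p ∈ SS n d a |
    (¬ ∃ q ∈ SS n d a, q + (0, d) = p) ∧ (¬ ∃ q ∈ SS n d a, q + (d, 0) = p)}

/-- The exceptional set
`E_S = {p ∈ S : p - (0,d) ∈ S, p - (d,0) ∈ S, p - (d,d) ∉ S}`. -/
def ES (n d : ℕ) (a : ℕ → ℕ) : Set (ℕ × ℕ) :=
  {p ∈ SS n d a |
    (∃ q ∈ SS n d a, q + (0, d) = p) ∧ (∃ q ∈ SS n d a, q + (d, 0) = p) ∧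
      (¬ ∃ q ∈ SS n d a, q + (d, d) = p)}

/-- The level `L_s = {(x,y) ∈ ℕ² : x + y = sd}`. -/
def Lev (d s : ℕ) : Set (ℕ × ℕ) := {p | p.1 + p.2 = s * d}

/-- `AP_s = AP_S ∩ L_s`. -/
def APs (n d : ℕ) (a : ℕ → ℕ) (s : ℕ) : Set (ℕ × ℕ) := APS n d a ∩ Lev d s

/-- `E_s = E_S ∩ L_s`. -/
def Es (n d : ℕ) (a : ℕ → ℕ) (s : ℕ) : Set (ℕ × ℕ) := ES n d a ∩ Lev d s

/-- `m(AP_S) = max {s : AP_s ≠ ∅}`. -/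
noncomputable def mAP (n d : ℕ) (a : ℕ → ℕ) : ℕ := sSup {s | APs n d a s ≠ ∅}

/-- The Apery set of `S₁` with respect to `d`: `{x ∈ S₁ : x - d ∉ S₁}`. -/
def Ap1 (n d : ℕ) (a : ℕ → ℕ) : Set ℕ := {x ∈ S1 n a | ¬ ∃ y ∈ S1 n a, y + d = x}

/-- The Apery set of `S₂` with respect to `d`: `{x ∈ S₂ : x - d ∉ S₂}`. -/
def Ap2 (n d : ℕ) (a : ℕ → ℕ) : Set ℕ := {x ∈ S2 n d a | ¬ ∃ y ∈ S2 n d a, y + d = x}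

/-- `G`, the subgroup of ℤ² generated by `S`. -/
def G (n d : ℕ) (a : ℕ → ℕ) : AddSubgroup (ℤ × ℤ) :=
  AddSubgroup.closure {p | ∃ i < n, p = ((a i : ℤ), (d : ℤ) - (a i : ℤ))}

/-- `S₁` viewed inside ℤ. -/
def S1Z (n : ℕ) (a : ℕ → ℕ) : Set ℤ := Nat.cast '' S1 n a

/-- `S₂` viewed inside ℤ. -/
def S2Z (n d : ℕ) (a : ℕ → ℕ) : Set ℤ := Nat.cast '' S2 n d a

/-- `S' = G ∩ (S₁ × S₂)`. -/
def Sprime (n d : ℕ) (a : ℕ → ℕ) : Set (ℤ × ℤ) :=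
  {p | p ∈ G n d a ∧ p.1 ∈ S1Z n a ∧ p.2 ∈ S2Z n d a}

/-- The homogeneous semigroup `S` viewed inside ℤ². -/
def SZ (n d : ℕ) (a : ℕ → ℕ) : Set (ℤ × ℤ) :=
  (fun p : ℕ × ℕ => ((p.1 : ℤ), (p.2 : ℤ))) '' SS n d a

theorem exists_eq_add_mul_of_le_of_mod_eq {d x y : ℕ} (hle : x ≤ y) (hm : x % d = y % d) :
    ∃ k, y = x + k * d := by
  obtain ⟨k, hk⟩ := (Nat.modEq_iff_dvd' hle).mp hm
  exact ⟨k, by rw [mul_comm, ← hk, Nat.add_sub_cancel' hle]⟩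

theorem mod_eq_sub_mod_of_dvd_add {d x y : ℕ} (hd : 0 < d) (h : d ∣ x + y) :
    x % d = (d - y % d) % d := by
  obtain ⟨k, hk⟩ : d ∣ x % d + y % d := by
    rwa [Nat.dvd_iff_mod_eq_zero, ← Nat.add_mod, ← Nat.dvd_iff_mod_eq_zero]
  have hx := Nat.mod_lt x hd
  have hy := Nat.mod_lt y hd
  have hk2 : k < 2 := Nat.lt_of_mul_lt_mul_left (a := d) (by omega)
  interval_cases k
  · rw [show y % d = 0 by omega, show x % d = 0 by omega, Nat.sub_zero, Nat.mod_self]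
  · rw [show d - y % d = x % d by omega, Nat.mod_mod]

section Apery

variable {M : AddSubmonoid ℕ} {d c x : ℕ}

theorem exists_eq_add_mul_of_apery (hd : d ∈ M) (hc : ¬ ∃ y ∈ M, y + d = c) (hx : x ∈ M)
    (hcx : c % d = x % d) : ∃ k, x = c + k * d := by
  rcases le_or_gt c x with hle | hlt
  · exact exists_eq_add_mul_of_le_of_mod_eq hle hcx
  · obtain ⟨_ | k, hk⟩ := exists_eq_add_mul_of_le_of_mod_eq hlt.le hcx.symm
    · omega
    · refine absurd ⟨x + k * d, M.add_mem hx ?_, by rw [hk]; ring⟩ hc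
      simpa using M.nsmul_mem hd k

theorem eq_zero_of_apery (hd : d ∈ M) (hc : ¬ ∃ y ∈ M, y + d = c) (hc0 : c % d = 0) : c = 0 := by
  obtain ⟨k, hk⟩ := exists_eq_add_mul_of_apery hd hc M.zero_mem (by rw [hc0, Nat.zero_mod])
  omega

end Apery

section Homogeneous

variable {n d : ℕ} {a : ℕ → ℕ}

theorem gen_mem_SS {i : ℕ} (hi : i < n) : (a i, d - a i) ∈ SS n d a :=
  AddSubmonoid.subset_closure ⟨i, hi, rfl⟩

theorem fst_mem_S1 {p : ℕ × ℕ} (hp : p ∈ SS n d a) : p.1 ∈ S1 n a := by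
  refine (AddSubmonoid.closure_le
    (S := (AddSubmonoid.closure _).comap (AddMonoidHom.fst ℕ ℕ))).2 ?_ hp
  rintro _ ⟨i, hi, rfl⟩
  exact AddSubmonoid.subset_closure ⟨i, hi, rfl⟩

theorem snd_mem_S2 {p : ℕ × ℕ} (hp : p ∈ SS n d a) : p.2 ∈ S2 n d a := by
  refine (AddSubmonoid.closure_le
    (S := (AddSubmonoid.closure _).comap (AddMonoidHom.snd ℕ ℕ))).2 ?_ hp
  rintro _ ⟨i, hi, rfl⟩
  exact AddSubmonoid.subset_closure ⟨i, hi, rfl⟩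

theorem exists_mem_SS_fst {x : ℕ} (hx : x ∈ S1 n a) : ∃ y, (x, y) ∈ SS n d a := by
  induction hx using AddSubmonoid.closure_induction with
  | mem x hx =>
    obtain ⟨i, hi, rfl⟩ := hx
    exact ⟨d - a i, gen_mem_SS hi⟩
  | zero => exact ⟨0, AddSubmonoid.zero_mem _⟩
  | add x x' _ _ hx hx' =>
    obtain ⟨y, hy⟩ := hx
    obtain ⟨y', hy'⟩ := hx'
    exact ⟨y + y', AddSubmonoid.add_mem _ hy hy'⟩

theorem exists_mem_SS_snd {y : ℕ} (hy : y ∈ S2 n d a) : ∃ x, (x, y) ∈ SS n d a := by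
  induction hy using AddSubmonoid.closure_induction with
  | mem y hy =>
    obtain ⟨i, hi, rfl⟩ := hy
    exact ⟨a i, gen_mem_SS hi⟩
  | zero => exact ⟨0, AddSubmonoid.zero_mem _⟩
  | add y y' _ _ hy hy' =>
    obtain ⟨x, hx⟩ := hy
    obtain ⟨x', hx'⟩ := hy'
    exact ⟨x + x', AddSubmonoid.add_mem _ hx hx'⟩

theorem dvd_add_of_mem_SS (hle : ∀ i < n, a i ≤ d) {p : ℕ × ℕ} (hp : p ∈ SS n d a) :
    d ∣ p.1 + p.2 := by
  induction hp using AddSubmonoid.closure_induction with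
  | mem p hp =>
    obtain ⟨i, hi, rfl⟩ := hp
    rw [Nat.add_sub_cancel' (hle i hi)]
  | zero => exact dvd_zero d
  | add p q _ _ hp hq =>
    rw [Prod.fst_add, Prod.snd_add, add_add_add_comm]
    exact dvd_add hp hq

theorem add_mul_mem_SS (he₁ : (d, 0) ∈ SS n d a) (he₂ : (0, d) ∈ SS n d a) {x y : ℕ}
    (hp : (x, y) ∈ SS n d a) (k m : ℕ) : (x + k * d, y + m * d) ∈ SS n d a := by
  have h := AddSubmonoid.add_mem _ hp (AddSubmonoid.add_mem _
    (AddSubmonoid.nsmul_mem _ he₁ k) (AddSubmonoid.nsmul_mem _ he₂ m))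
  simp only [Prod.smul_mk, smul_eq_mul, mul_zero, Prod.mk_add_mk, add_zero, zero_add] at h
  exact h

theorem mem_APS_of_mem_Ap {x y : ℕ} (hp : (x, y) ∈ SS n d a) (hx : x ∈ Ap1 n d a)
    (hy : y ∈ Ap2 n d a) : (x, y) ∈ APS n d a :=
  ⟨hp, fun ⟨q, hq, h⟩ => hy.2 ⟨q.2, snd_mem_S2 hq, congrArg Prod.snd h⟩,
    fun ⟨q, hq, h⟩ => hx.2 ⟨q.1, fst_mem_S1 hq, congrArg Prod.fst h⟩⟩

theorem exists_mem_APS_fst (hd : 0 < d) {x : ℕ} (hx : x ∈ Ap1 n d a) :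
    ∃ y, (x, y) ∈ APS n d a := by
  classical
  have h : ∃ y, (x, y) ∈ SS n d a := exists_mem_SS_fst hx.1
  refine ⟨Nat.find h, Nat.find_spec h, ?_,
    fun ⟨q, hq, he⟩ => hx.2 ⟨q.1, fst_mem_S1 hq, congrArg Prod.fst he⟩⟩
  rintro ⟨⟨x', y⟩, hq, he⟩
  simp only [Prod.mk_add_mk, add_zero, Prod.mk.injEq] at he
  exact Nat.find_min h (by omega) (he.1 ▸ hq)

theorem exists_mem_APS_snd (hd : 0 < d) {y : ℕ} (hy : y ∈ Ap2 n d a) :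
    ∃ x, (x, y) ∈ APS n d a := by
  classical
  have h : ∃ x, (x, y) ∈ SS n d a := exists_mem_SS_snd hy.1
  refine ⟨Nat.find h, Nat.find_spec h,
    fun ⟨q, hq, he⟩ => hy.2 ⟨q.2, snd_mem_S2 hq, congrArg Prod.snd he⟩, ?_⟩
  rintro ⟨⟨x, y'⟩, hq, he⟩
  simp only [Prod.mk_add_mk, add_zero, Prod.mk.injEq] at he
  exact Nat.find_min h (by omega) (he.2 ▸ hq)

theorem eq_zero_of_add_mul_mem_APS (he₁ : (d, 0) ∈ SS n d a) (he₂ : (0, d) ∈ SS n d a)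
    {x y k m : ℕ} (hp : (x, y) ∈ SS n d a) (h : (x + k * d, y + m * d) ∈ APS n d a) :
    k = 0 ∧ m = 0 := by
  obtain ⟨-, h₂, h₁⟩ := h
  constructor
  · rcases k with _ | k
    · rfl
    · exact absurd ⟨_, add_mul_mem_SS he₁ he₂ hp k m, by ext <;> simp [add_mul, add_assoc]⟩ h₁
  · rcases m with _ | m
    · rfl
    · exact absurd ⟨_, add_mul_mem_SS he₁ he₂ hp k m, by ext <;> simp [add_mul, add_assoc]⟩ h₂

end Homogeneous

section AperyCoordinates

variable {n d : ℕ} {a r t : ℕ → ℕ}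

theorem exists_eq_apery_add_mul (hd : 0 < d) (he₁ : (d, 0) ∈ SS n d a)
    (he₂ : (0, d) ∈ SS n d a) (hr : ∀ i < d, r i ∈ Ap1 n d a ∧ r i % d = i % d)
    (ht : ∀ i < d, t i ∈ Ap2 n d a ∧ t i % d = i % d) {x y : ℕ} (hx : x ∈ S1 n a)
    (hy : y ∈ S2 n d a) (hxy : d ∣ x + y) :
    ∃ i, ∃ j < d, i = (d - j) % d ∧ ∃ k m, x = r i + k * d ∧ y = t j + m * d := by
  obtain ⟨hrx, hrx_mod⟩ := hr (x % d) (Nat.mod_lt x hd)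
  obtain ⟨hty, hty_mod⟩ := ht (y % d) (Nat.mod_lt y hd)
  obtain ⟨k, hk⟩ := exists_eq_add_mul_of_apery (fst_mem_S1 he₁) hrx.2 hx
    (by rw [hrx_mod, Nat.mod_mod])
  obtain ⟨m, hm⟩ := exists_eq_add_mul_of_apery (snd_mem_S2 he₂) hty.2 hy
    (by rw [hty_mod, Nat.mod_mod])
  exact ⟨x % d, y % d, Nat.mod_lt y hd, mod_eq_sub_mod_of_dvd_add hd hxy,
    k, m, hk, hm⟩

theorem apery_fst_zero (hd : 0 < d) (he₁ : (d, 0) ∈ SS n d a)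
    (hr : ∀ i < d, r i ∈ Ap1 n d a ∧ r i % d = i % d) : r 0 = 0 :=
  eq_zero_of_apery (fst_mem_S1 he₁) (hr 0 hd).1.2 ((hr 0 hd).2.trans (Nat.zero_mod d))

theorem apery_snd_zero (hd : 0 < d) (he₂ : (0, d) ∈ SS n d a)
    (ht : ∀ i < d, t i ∈ Ap2 n d a ∧ t i % d = i % d) : t 0 = 0 :=
  eq_zero_of_apery (snd_mem_S2 he₂) (ht 0 hd).1.2 ((ht 0 hd).2.trans (Nat.zero_mod d))

theorem zero_mem_APS (hd : 0 < d) : ((0 : ℕ), (0 : ℕ)) ∈ APS n d a := by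
  refine ⟨AddSubmonoid.zero_mem _, fun ⟨q, _, h⟩ => ?_, fun ⟨q, _, h⟩ => ?_⟩
  · have := congrArg Prod.snd h
    simp only [Prod.snd_add] at this
    omega
  · have := congrArg Prod.fst h
    simp only [Prod.fst_add] at this
    omega

theorem pair_mem_SS (hd : 0 < d) (he₁ : (d, 0) ∈ SS n d a) (he₂ : (0, d) ∈ SS n d a)
    (hr : ∀ i < d, r i ∈ Ap1 n d a ∧ r i % d = i % d)
    (ht : ∀ i < d, t i ∈ Ap2 n d a ∧ t i % d = i % d)
    (h1 : ∀ i, 1 ≤ i → i ≤ d - 1 → (r i, t (d - i)) ∈ SS n d a) {i j : ℕ} (hj : j < d)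
    (hij : i = (d - j) % d) : (r i, t j) ∈ SS n d a := by
  rcases Nat.eq_zero_or_pos j with rfl | hj₀
  · rw [hij, Nat.sub_zero, Nat.mod_self, apery_fst_zero hd he₁ hr, apery_snd_zero hd he₂ ht]
    exact AddSubmonoid.zero_mem _
  · rw [hij, Nat.mod_eq_of_lt (by omega)]
    simpa [Nat.sub_sub_self hj.le] using h1 (d - j) (by omega) (by omega)

theorem mem_SS_of_forall_pair_mem (hd : 0 < d) (he₁ : (d, 0) ∈ SS n d a)
    (he₂ : (0, d) ∈ SS n d a) (hr : ∀ i < d, r i ∈ Ap1 n d a ∧ r i % d = i % d)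
    (ht : ∀ i < d, t i ∈ Ap2 n d a ∧ t i % d = i % d)
    (h1 : ∀ i, 1 ≤ i → i ≤ d - 1 → (r i, t (d - i)) ∈ SS n d a) {x y : ℕ} (hx : x ∈ S1 n a)
    (hy : y ∈ S2 n d a) (hxy : d ∣ x + y) : (x, y) ∈ SS n d a := by
  obtain ⟨i, j, hj, hij, k, m, rfl, rfl⟩ := exists_eq_apery_add_mul hd he₁ he₂ hr ht hx hy hxy
  exact add_mul_mem_SS he₁ he₂ (pair_mem_SS hd he₁ he₂ hr ht h1 hj hij) k m

theorem APS_eq_of_forall_pair_mem (hd : 0 < d) (hle : ∀ i < n, a i ≤ d)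
    (he₁ : (d, 0) ∈ SS n d a) (he₂ : (0, d) ∈ SS n d a)
    (hr : ∀ i < d, r i ∈ Ap1 n d a ∧ r i % d = i % d)
    (ht : ∀ i < d, t i ∈ Ap2 n d a ∧ t i % d = i % d)
    (h1 : ∀ i, 1 ≤ i → i ≤ d - 1 → (r i, t (d - i)) ∈ SS n d a) :
    APS n d a = ({((0 : ℕ), (0 : ℕ))} : Set (ℕ × ℕ))
      ∪ {p | ∃ i : ℕ, 1 ≤ i ∧ i ≤ d - 1 ∧ p = (r i, t (d - i))} := by
  ext ⟨x, y⟩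
  constructor
  · intro hp
    obtain ⟨i, j, hj, hij, k, m, rfl, rfl⟩ := exists_eq_apery_add_mul hd he₁ he₂ hr ht
      (fst_mem_S1 hp.1) (snd_mem_S2 hp.1) (dvd_add_of_mem_SS hle hp.1)
    obtain ⟨rfl, rfl⟩ :=
      eq_zero_of_add_mul_mem_APS he₁ he₂ (pair_mem_SS hd he₁ he₂ hr ht h1 hj hij) hp
    simp only [zero_mul, add_zero]
    rcases Nat.eq_zero_or_pos j with rfl | hj₀
    · left
      rw [hij, Nat.sub_zero, Nat.mod_self, apery_fst_zero hd he₁ hr, apery_snd_zero hd he₂ ht]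
      rfl
    · rw [Nat.mod_eq_of_lt (by omega)] at hij
      exact Or.inr ⟨i, by omega, by omega, by rw [hij, Nat.sub_sub_self hj.le]⟩
  · rintro (hp | ⟨i, hi₁, hid, hp⟩)
    · rw [Set.mem_singleton_iff.1 hp]
      exact zero_mem_APS hd
    · rw [hp]
      exact mem_APS_of_mem_Ap (h1 i hi₁ hid) (hr i (by omega)).1 (ht (d - i) (by omega)).1

theorem ES_eq_empty_of_forall_pair_mem (hd : 0 < d) (hle : ∀ i < n, a i ≤ d)
    (he₁ : (d, 0) ∈ SS n d a) (he₂ : (0, d) ∈ SS n d a)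
    (hr : ∀ i < d, r i ∈ Ap1 n d a ∧ r i % d = i % d)
    (ht : ∀ i < d, t i ∈ Ap2 n d a ∧ t i % d = i % d)
    (h1 : ∀ i, 1 ≤ i → i ≤ d - 1 → (r i, t (d - i)) ∈ SS n d a) : ES n d a = ∅ := by
  rw [Set.eq_empty_iff_forall_notMem]
  rintro ⟨x, y⟩ ⟨hp, ⟨⟨x₁, y₁⟩, hq₁, h₁⟩, ⟨⟨x₂, y₂⟩, hq₂, h₂⟩, hno⟩
  simp only [Prod.mk_add_mk, add_zero, Prod.mk.injEq] at h₁ h₂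
  obtain ⟨rfl, rfl⟩ := h₁
  obtain ⟨rfl, rfl⟩ := h₂
  have hdvd : d ∣ x₂ + y₁ := by
    have h := dvd_add_of_mem_SS hle hp
    rw [show x₂ + d + (y₁ + d) = x₂ + y₁ + 2 * d by ring] at h
    exact (Nat.dvd_add_left (dvd_mul_left d 2)).mp h
  exact hno ⟨(x₂, y₁), mem_SS_of_forall_pair_mem hd he₁ he₂ hr ht h1 (fst_mem_S1 hq₂)
    (snd_mem_S2 hq₁) hdvd, rfl⟩

end AperyCoordinates

section Exceptional

variable {n d : ℕ} {a : ℕ → ℕ}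

theorem mem_SS_of_ES_eq_empty (hE : ES n d a = ∅) (he₂ : (0, d) ∈ SS n d a) {u v : ℕ}
    (h₁ : (u, v + d) ∈ SS n d a) (h₂ : (u + d, v) ∈ SS n d a) : (u, v) ∈ SS n d a := by
  by_contra h
  have hP : (u + d, v + d) ∈ ES n d a :=
    ⟨AddSubmonoid.add_mem _ h₂ he₂, ⟨_, h₂, rfl⟩, ⟨_, h₁, rfl⟩, fun ⟨q, hq, hq'⟩ =>
      h (add_right_cancel (b := (d, d)) (c := (u, v)) hq' ▸ hq)⟩
  simp [hE] at hP

theorem mem_SS_of_add_mul_mem_SS (hE : ES n d a = ∅) (he₁ : (d, 0) ∈ SS n d a)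
    (he₂ : (0, d) ∈ SS n d a) {x w : ℕ} (h₁ : (x, w + d) ∈ SS n d a) :
    ∀ {k : ℕ}, (x + k * d, w) ∈ SS n d a → (x, w) ∈ SS n d a
  | 0, h₂ => by simpa using h₂
  | k + 1, h₂ => mem_SS_of_add_mul_mem_SS hE he₁ he₂ h₁ <|
      mem_SS_of_ES_eq_empty hE he₂ (by simpa using add_mul_mem_SS he₁ he₂ h₁ k 0)
        (by rwa [add_mul, one_mul, ← add_assoc] at h₂)

theorem injOn_mod_of_ES_eq_empty (hd : 0 < d) (hle : ∀ i < n, a i ≤ d)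
    (he₁ : (d, 0) ∈ SS n d a) (he₂ : (0, d) ∈ SS n d a) (hE : ES n d a = ∅) :
    Set.InjOn (fun p : ℕ × ℕ => p.1 % d) (APS n d a) := by
  rintro ⟨x, y⟩ hp ⟨x', y'⟩ hq (hxx' : x % d = x' % d)
  wlog hx : x ≤ x' generalizing x y x' y'
  · exact (this x' y' hq x y hp hxx'.symm (by omega)).symm
  have hyy' : y % d = y' % d := by
    have hyx : d ∣ y + x := add_comm x y ▸ dvd_add_of_mem_SS hle hp.1
    have hyx' : d ∣ y' + x' := add_comm x' y' ▸ dvd_add_of_mem_SS hle hq.1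
    rw [mod_eq_sub_mod_of_dvd_add hd hyx, mod_eq_sub_mod_of_dvd_add hd hyx', hxx']
  obtain ⟨k, rfl⟩ := exists_eq_add_mul_of_le_of_mod_eq hx hxx'
  rcases le_or_gt y y' with hy | hy
  · obtain ⟨m, rfl⟩ := exists_eq_add_mul_of_le_of_mod_eq hy hyy'
    obtain ⟨rfl, rfl⟩ := eq_zero_of_add_mul_mem_APS he₁ he₂ hp.1 hq
    simp
  · obtain ⟨_ | m, rfl⟩ := exists_eq_add_mul_of_le_of_mod_eq hy.le hyy'.symm
    · omega
    · refine absurd ⟨(x, y' + m * d), mem_SS_of_add_mul_mem_SS hE he₁ he₂ ?_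
        (by simpa using add_mul_mem_SS he₁ he₂ hq.1 0 m), ?_⟩ hp.2.1
      · simpa [add_mul, add_assoc] using hp.1
      · ext <;> simp [add_mul, add_assoc]

end Exceptional

section Cardinality

variable {n d : ℕ} {a r t : ℕ → ℕ}

theorem image_mod_APS (hd : 0 < d) (hr : ∀ i < d, r i ∈ Ap1 n d a ∧ r i % d = i % d) :
    (fun p : ℕ × ℕ => p.1 % d) '' APS n d a = Set.Iio d := by
  ext i
  constructor
  · rintro ⟨p, -, rfl⟩
    exact Nat.mod_lt _ hd
  · intro hi
    obtain ⟨y, hy⟩ := exists_mem_APS_fst hd (hr i hi).1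
    exact ⟨_, hy, show r i % d = i by rw [(hr i hi).2, Nat.mod_eq_of_lt hi]⟩

theorem ncard_APS_eq_iff_injOn (hd : 0 < d) (hr : ∀ i < d, r i ∈ Ap1 n d a ∧ r i % d = i % d) :
    (APS n d a).ncard = d ↔ Set.InjOn (fun p : ℕ × ℕ => p.1 % d) (APS n d a) := by
  have himage := congrArg Set.ncard (image_mod_APS hd hr)
  rw [Set.ncard_Iio_nat] at himage
  refine ⟨fun h => Set.injOn_of_ncard_image_eq (himage.trans h.symm)
    (Set.finite_of_ncard_pos (by omega)), fun h => ?_⟩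
  rw [← h.ncard_image, himage]

theorem injOn_mod_of_APS_eq (hr : ∀ i < d, r i ∈ Ap1 n d a ∧ r i % d = i % d)
    (h2 : APS n d a = ({((0 : ℕ), (0 : ℕ))} : Set (ℕ × ℕ))
      ∪ {p | ∃ i : ℕ, 1 ≤ i ∧ i ≤ d - 1 ∧ p = (r i, t (d - i))}) :
    Set.InjOn (fun p : ℕ × ℕ => p.1 % d) (APS n d a) := by
  rw [h2]
  refine Set.LeftInvOn.injOn
    (f₁' := fun i => if i = 0 then ((0 : ℕ), (0 : ℕ)) else (r i, t (d - i))) ?_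
  rintro _ (rfl | ⟨i, hi₁, hid, rfl⟩)
  · simp
  · have hri : r i % d = i := by rw [(hr i (by omega)).2, Nat.mod_eq_of_lt (by omega)]
    simp [hri, Nat.pos_iff_ne_zero.1 hi₁]

theorem pair_mem_SS_of_injOn (hd : 0 < d) (hle : ∀ i < n, a i ≤ d)
    (hr : ∀ i < d, r i ∈ Ap1 n d a ∧ r i % d = i % d)
    (ht : ∀ i < d, t i ∈ Ap2 n d a ∧ t i % d = i % d)
    (hinj : Set.InjOn (fun p : ℕ × ℕ => p.1 % d) (APS n d a)) {i : ℕ} (hi₁ : 1 ≤ i)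
    (hid : i ≤ d - 1) : (r i, t (d - i)) ∈ SS n d a := by
  obtain ⟨y, hy⟩ := exists_mem_APS_fst hd (hr i (by omega)).1
  obtain ⟨x, hx⟩ := exists_mem_APS_snd hd (ht (d - i) (by omega)).1
  have hxi : x % d = r i % d := by
    rw [mod_eq_sub_mod_of_dvd_add hd (dvd_add_of_mem_SS hle hx.1), (ht (d - i) (by omega)).2,
      (hr i (by omega)).2, Nat.mod_eq_of_lt (by omega : d - i < d), Nat.sub_sub_self (by omega)]
  obtain ⟨rfl, -⟩ := Prod.mk.injEq _ _ _ _ ▸ hinj hx hy hxi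
  exact hx.1

end Cardinality

theorem charCM_general (n d : ℕ) (a : ℕ → ℕ)
    (hn : 4 ≤ n)
    (ha0 : a 0 = 0)
    (had : a (n - 1) = d)
    (hmono : ∀ i j, i < j → j ≤ n - 1 → a i < a j)
    (r t : ℕ → ℕ)
    (hr : ∀ i < d, r i ∈ Ap1 n d a ∧ r i % d = i % d)
    (ht : ∀ i < d, t i ∈ Ap2 n d a ∧ t i % d = i % d) :
    List.TFAE
      [ (∀ i : ℕ, 1 ≤ i → i ≤ d - 1 → (r i, t (d - i)) ∈ SS n d a),
        APS n d a
          = ({((0 : ℕ), (0 : ℕ))} : Set (ℕ × ℕ))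
              ∪ {p | ∃ i : ℕ, 1 ≤ i ∧ i ≤ d - 1 ∧ p = (r i, t (d - i))},
        (APS n d a).ncard = d,
        ES n d a = ∅ ] := by
  have hd : 0 < d := by simpa [ha0, had] using hmono 0 (n - 1) (by omega) le_rfl
  have hle : ∀ i < n, a i ≤ d := fun i hi => by
    rcases (show i < n - 1 ∨ i = n - 1 by omega) with h | rfl
    · exact had ▸ (hmono i _ h le_rfl).le
    · exact had.le
  have he₁ : (d, 0) ∈ SS n d a := by
    simpa [had] using gen_mem_SS (d := d) (a := a) (by omega : n - 1 < n)
  have he₂ : (0, d) ∈ SS n d a := by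
    simpa [ha0] using gen_mem_SS (d := d) (a := a) (by omega : 0 < n)
  tfae_have 1 → 2 := APS_eq_of_forall_pair_mem hd hle he₁ he₂ hr ht
  tfae_have 2 → 3 := fun h2 => (ncard_APS_eq_iff_injOn hd hr).2 (injOn_mod_of_APS_eq hr h2)
  tfae_have 3 → 1 := fun h3 _ =>
    pair_mem_SS_of_injOn hd hle hr ht ((ncard_APS_eq_iff_injOn hd hr).1 h3)
  tfae_have 1 → 4 := ES_eq_empty_of_forall_pair_mem hd hle he₁ he₂ hr ht
  tfae_have 4 → 3 := fun hE =>
    (ncard_APS_eq_iff_injOn hd hr).2 (injOn_mod_of_ES_eq_empty hd hle he₁ he₂ hE)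
  tfae_finish

/-- Characterization of arithmetic Cohen–Macaulayness of the curve `C_A`:
(i) `(rᵢ, t_{d-i}) ∈ S` for all `1 ≤ i ≤ d-1`;
(ii) `AP_S = {(0,0)} ∪ {(rᵢ, t_{d-i}) : 1 ≤ i ≤ d-1}`;
(iii) `|AP_S| = d`; (iv) `E_S = ∅` are all equivalent. -/
theorem charCM (n d : ℕ) (a : ℕ → ℕ)
    (hn : 4 ≤ n)
    (ha0 : a 0 = 0)
    (had : a (n - 1) = d)
    (hmono : ∀ i j, i < j → j ≤ n - 1 → a i < a j)
    (hgcd : (Finset.Icc 1 (n - 1)).gcd a = 1)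
    (r t : ℕ → ℕ)
    (hr : ∀ i < d, r i ∈ Ap1 n d a ∧ r i % d = i % d)
    (ht : ∀ i < d, t i ∈ Ap2 n d a ∧ t i % d = i % d) :
    List.TFAE
      [ (∀ i : ℕ, 1 ≤ i → i ≤ d - 1 → (r i, t (d - i)) ∈ SS n d a),
        APS n d a
          = ({((0 : ℕ), (0 : ℕ))} : Set (ℕ × ℕ))
              ∪ {p | ∃ i : ℕ, 1 ≤ i ∧ i ≤ d - 1 ∧ p = (r i, t (d - i))},
        (APS n d a).ncard = d,
        ES n d a = ∅ ] :=
  charCM_general n d a hn ha0 had hmono r t hr ht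

end SumsetsCurve
end

section
/- For all s ∈ ℕ, |AP_s| − |E_s| = |sA| − 2|(s−1)A| + |(s−2)A|, where by convention |sA| = 0 for s < 0 (note |0A| = 1). -/
/-!
A point `(x, y)` of the level `L_s` lies in `S` iff `x ∈ sA`, and for `u + v = kd` the point
`(x, y) - (u, v)` lies in `S` iff `x - u ∈ (s - k)A`. Projecting to the first coordinate therefore
identifies `AP_s` with `sA \ ((s-1)A ∪ (d + (s-1)A))` and `E_s` with
`((s-1)A ∩ (d + (s-1)A)) \ (d + (s-2)A)`. Since `0, d ∈ A`, the sets `(s-1)A` and `d + (s-1)A`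
lie in `sA` and both contain `d + (s-2)A`, so inclusion–exclusion gives the formula.
-/

open scoped BigOperators

namespace SumsetsCurve

/-- The extended counting function `s ↦ |sA|`, with the convention `|sA| = 0` for `s < 0`. -/
noncomputable def nAZ (n : ℕ) (a : ℕ → ℕ) (m : ℤ) : ℤ :=
  if 0 ≤ m then ((sumset n a m.toNat).ncard : ℤ) else 0

variable {n d : ℕ} {a : ℕ → ℕ}

lemma sumset_zero : sumset n a 0 = {0} := by
  ext x
  constructor
  · rintro ⟨f, -, rfl⟩
    simp
  · rintro rfl
    exact ⟨Fin.elim0, fun i => i.elim0, by simp⟩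

lemma mem_sumset_succ {s x : ℕ} :
    x ∈ sumset n a (s + 1) ↔ ∃ i < n, ∃ y ∈ sumset n a s, x = a i + y := by
  constructor
  · rintro ⟨f, hf, rfl⟩
    exact ⟨f 0, hf 0, ∑ i : Fin s, a (f i.succ), ⟨fun i => f i.succ, fun i => hf _, rfl⟩,
      Fin.sum_univ_succ _⟩
  · rintro ⟨i, hi, y, ⟨g, hg, rfl⟩, rfl⟩
    refine ⟨Fin.cons i g, fun j => ?_, by simp [Fin.sum_univ_succ]⟩
    induction j using Fin.cases with
    | zero => simpa using hi
    | succ j => simpa using hg j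

lemma le_mul_of_mem_sumset (hle : ∀ i < n, a i ≤ d) {s x : ℕ} (hx : x ∈ sumset n a s) :
    x ≤ s * d := by
  induction s generalizing x with
  | zero => simp_all [sumset_zero]
  | succ s ih =>
    obtain ⟨i, hi, y, hy, rfl⟩ := mem_sumset_succ.mp hx
    have := ih hy
    have := hle i hi
    rw [add_one_mul]
    omega

lemma mem_SS_iff (hle : ∀ i < n, a i ≤ d) {p : ℕ × ℕ} :
    p ∈ SS n d a ↔ ∃ t, p.1 ∈ sumset n a t ∧ p.1 + p.2 = t * d := by
  constructor
  · intro hp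
    induction hp using AddSubmonoid.closure_induction_left with
    | zero => exact ⟨0, by simp [sumset_zero]⟩
    | add_left q hq r _ ih =>
      obtain ⟨i, hi, rfl⟩ := hq
      obtain ⟨t, hr, hrt⟩ := ih
      have := hle i hi
      refine ⟨t + 1, mem_sumset_succ.mpr ⟨i, hi, r.1, hr, rfl⟩, ?_⟩
      simp only [Prod.fst_add, Prod.snd_add, add_one_mul]
      omega
  · obtain ⟨x, y⟩ := p
    rintro ⟨t, hx, hxy⟩
    induction t generalizing x y with
    | zero =>
      obtain rfl : x = 0 := by simpa [sumset_zero] using hx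
      obtain rfl : y = 0 := by simpa using hxy
      exact zero_mem _
    | succ t ih =>
      obtain ⟨i, hi, z, hz, rfl⟩ := mem_sumset_succ.mp hx
      have := hle i hi
      have := le_mul_of_mem_sumset hle hz
      rw [add_one_mul] at hxy
      have hgen : ((a i, d - a i) : ℕ × ℕ) ∈ SS n d a := AddSubmonoid.subset_closure ⟨i, hi, rfl⟩
      have hsum : ((a i, d - a i) : ℕ × ℕ) + (z, t * d - z) = (a i + z, y) := by
        simp only [Prod.mk_add_mk, Prod.mk.injEq, true_and]
        omega
      exact hsum ▸ add_mem hgen (ih z _ hz (by omega))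

def sumsetInt (n : ℕ) (a : ℕ → ℕ) (m : ℤ) : Set ℕ := {x | 0 ≤ m ∧ x ∈ sumset n a m.toNat}

lemma nAZ_eq_ncard_sumsetInt (m : ℤ) : nAZ n a m = (sumsetInt n a m).ncard := by
  unfold nAZ sumsetInt
  split_ifs with hm <;> simp [hm]

lemma sumsetInt_natCast (s : ℕ) : sumsetInt n a s = sumset n a s := by
  simp [sumsetInt]

lemma mem_sumsetInt_natCast_sub {s k x : ℕ} :
    x ∈ sumsetInt n a ((s : ℤ) - k) ↔ k ≤ s ∧ x ∈ sumset n a (s - k) := by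
  simp only [sumsetInt, Set.mem_ofPred_eq, sub_nonneg, Nat.cast_le]
  refine and_congr_right fun hks => ?_
  rw [show ((s : ℤ) - k).toNat = s - k by omega]

lemma image_add_sumsetInt_subset {c : ℕ} (hc : ∃ i < n, a i = c) (m : ℤ) :
    (· + c) '' sumsetInt n a m ⊆ sumsetInt n a (m + 1) := by
  rintro _ ⟨z, ⟨hm, hz⟩, rfl⟩
  obtain ⟨i, hi, rfl⟩ := hc
  refine ⟨by omega, ?_⟩
  rw [show (m + 1).toNat = m.toNat + 1 by omega]
  exact mem_sumset_succ.mpr ⟨i, hi, z, hz, add_comm _ _⟩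

lemma sumsetInt_subset_succ (h0 : ∃ i < n, a i = 0) (m : ℤ) :
    sumsetInt n a m ⊆ sumsetInt n a (m + 1) := by
  simpa using image_add_sumsetInt_subset h0 m

lemma exists_add_eq_mem_SS_iff (hd : 0 < d) (hle : ∀ i < n, a i ≤ d) {s k x y u v : ℕ}
    (hxy : x + y = s * d) (huv : u + v = k * d) :
    (∃ q ∈ SS n d a, q + (u, v) = (x, y)) ↔ ∃ z ∈ sumsetInt n a ((s : ℤ) - k), z + u = x := by
  simp only [mem_sumsetInt_natCast_sub]
  constructor
  · rintro ⟨⟨z, w⟩, hq, hzw⟩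
    obtain ⟨t, hz, hzt⟩ := (mem_SS_iff hle).mp hq
    simp only [Prod.mk_add_mk, Prod.mk.injEq] at hzw
    have hts : t + k = s := Nat.eq_of_mul_eq_mul_right hd (by rw [add_mul]; omega)
    exact ⟨z, ⟨by omega, by rwa [← hts, Nat.add_sub_cancel]⟩, hzw.1⟩
  · rintro ⟨z, ⟨hks, hz⟩, rfl⟩
    have := le_mul_of_mem_sumset hle hz
    have hsk : (s - k) * d + k * d = s * d := by rw [← add_mul, Nat.sub_add_cancel hks]
    refine ⟨(z, (s - k) * d - z), (mem_SS_iff hle).mpr ⟨s - k, hz, by simp only; omega⟩, ?_⟩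
    simp only [Prod.mk_add_mk, Prod.mk.injEq, true_and]
    omega

lemma mem_SS_iff_of_add_eq (hd : 0 < d) (hle : ∀ i < n, a i ≤ d) {s x y : ℕ}
    (hxy : x + y = s * d) : (x, y) ∈ SS n d a ↔ x ∈ sumset n a s := by
  simpa [sumsetInt_natCast] using
    exists_add_eq_mem_SS_iff (n := n) (a := a) hd hle hxy (u := 0) (v := 0) (k := 0) (by simp)

lemma ncard_inter_Lev (X : Set (ℕ × ℕ)) (s : ℕ) :
    (X ∩ Lev d s).ncard = {x | x ≤ s * d ∧ (x, s * d - x) ∈ X}.ncard := by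
  rw [← Set.ncard_image_of_injective _ (fun x y h => congrArg Prod.fst h :
    Function.Injective fun x => (x, s * d - x))]
  congr 1
  ext ⟨x, y⟩
  simp only [Set.mem_inter_iff, Lev, Set.mem_ofPred_eq, Set.mem_image, Prod.mk.injEq]
  constructor
  · rintro ⟨hX, hxy⟩
    exact ⟨x, ⟨by omega, by rwa [show s * d - x = y by omega]⟩, rfl, by omega⟩
  · rintro ⟨x, ⟨hx, hX⟩, rfl, rfl⟩
    exact ⟨hX, by omega⟩

lemma finite_sumset (hle : ∀ i < n, a i ≤ d) (s : ℕ) : (sumset n a s).Finite :=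
  (Set.finite_Iic (s * d)).subset fun _ => le_mul_of_mem_sumset hle

lemma mk_mem_APS_iff (hd : 0 < d) (hle : ∀ i < n, a i ≤ d) {s x : ℕ} (hx : x ≤ s * d) :
    (x, s * d - x) ∈ APS n d a ↔ x ∈ sumset n a s ∧ x ∉ sumsetInt n a (s - 1) ∧
      x ∉ (· + d) '' sumsetInt n a (s - 1) := by
  have hxy : x + (s * d - x) = s * d := by omega
  rw [APS, Set.mem_sep_iff, mem_SS_iff_of_add_eq hd hle hxy,
    exists_add_eq_mem_SS_iff hd hle hxy (show 0 + d = 1 * d by ring),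
    exists_add_eq_mem_SS_iff hd hle hxy (show d + 0 = 1 * d by ring)]
  simp

lemma mk_mem_ES_iff (hd : 0 < d) (hle : ∀ i < n, a i ≤ d) {s x : ℕ} (hx : x ≤ s * d) :
    (x, s * d - x) ∈ ES n d a ↔ x ∈ sumset n a s ∧ x ∈ sumsetInt n a (s - 1) ∧
      x ∈ (· + d) '' sumsetInt n a (s - 1) ∧ x ∉ (· + d) '' sumsetInt n a (s - 2) := by
  have hxy : x + (s * d - x) = s * d := by omega
  rw [ES, Set.mem_sep_iff, mem_SS_iff_of_add_eq hd hle hxy,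
    exists_add_eq_mem_SS_iff hd hle hxy (show 0 + d = 1 * d by ring),
    exists_add_eq_mem_SS_iff hd hle hxy (show d + 0 = 1 * d by ring),
    exists_add_eq_mem_SS_iff hd hle hxy (show d + d = 2 * d by ring)]
  simp

lemma ncard_APs (hd : 0 < d) (hle : ∀ i < n, a i ≤ d) (s : ℕ) :
    (APs n d a s).ncard =
      (sumset n a s \ (sumsetInt n a (s - 1) ∪ (· + d) '' sumsetInt n a (s - 1))).ncard := by
  rw [APs, ncard_inter_Lev]
  congr 1
  ext x
  simp only [Set.mem_ofPred_eq, Set.mem_sdiff, Set.mem_union, not_or]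
  constructor
  · rintro ⟨hx, h⟩
    exact (mk_mem_APS_iff hd hle hx).mp h
  · intro h
    have hx := le_mul_of_mem_sumset hle h.1
    exact ⟨hx, (mk_mem_APS_iff hd hle hx).mpr h⟩

lemma ncard_Es (hd : 0 < d) (hle : ∀ i < n, a i ≤ d) (h0 : ∃ i < n, a i = 0) (s : ℕ) :
    (Es n d a s).ncard = ((sumsetInt n a (s - 1) ∩ (· + d) '' sumsetInt n a (s - 1)) \
      (· + d) '' sumsetInt n a (s - 2)).ncard := by
  rw [Es, ncard_inter_Lev]
  congr 1
  ext x
  simp only [Set.mem_ofPred_eq, Set.mem_sdiff, Set.mem_inter_iff, and_assoc]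
  constructor
  · rintro ⟨hx, h⟩
    exact ((mk_mem_ES_iff hd hle hx).mp h).2
  · rintro ⟨hB, hC, hD⟩
    have hU : x ∈ sumset n a s := by
      simpa [sumsetInt_natCast] using sumsetInt_subset_succ h0 _ hB
    have hx := le_mul_of_mem_sumset hle hU
    exact ⟨hx, (mk_mem_ES_iff hd hle hx).mpr ⟨hU, hB, hC, hD⟩⟩

lemma ncard_diff_union_sub_ncard_inter_diff {α : Type*} {U B C D : Set α} (hU : U.Finite)
    (hBC : B ∪ C ⊆ U) (hD : D ⊆ B ∩ C) :
    ((U \ (B ∪ C)).ncard : ℤ) - ((B ∩ C) \ D).ncard = U.ncard - B.ncard - C.ncard + D.ncard := by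
  have hB := hU.subset (Set.subset_union_left.trans hBC)
  have hC := hU.subset (Set.subset_union_right.trans hBC)
  have := Set.ncard_sdiff_add_ncard_of_subset hBC hU
  have := Set.ncard_sdiff_add_ncard_of_subset hD (hB.inter_of_left C)
  have := Set.ncard_union_add_ncard_inter B C hB hC
  omega

theorem levels_apsE_general (n d : ℕ) (a : ℕ → ℕ)
    (hn : 4 ≤ n)
    (ha0 : a 0 = 0)
    (had : a (n - 1) = d)
    (hmono : ∀ i j, i < j → j ≤ n - 1 → a i < a j) :
    ∀ s : ℕ,
      ((APs n d a s).ncard : ℤ) - ((Es n d a s).ncard : ℤ)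
        = nAZ n a (s : ℤ) - 2 * nAZ n a ((s : ℤ) - 1) + nAZ n a ((s : ℤ) - 2) := by
  have hd : 0 < d := had ▸ ha0 ▸ hmono 0 (n - 1) (by omega) le_rfl
  have hle : ∀ i < n, a i ≤ d := fun i hi => by
    rcases (show i < n - 1 ∨ i = n - 1 by omega) with h | rfl
    · exact had ▸ (hmono i _ h le_rfl).le
    · exact had.le
  have h0 : ∃ i < n, a i = 0 := ⟨0, by omega, ha0⟩
  have hdA : ∃ i < n, a i = d := ⟨n - 1, by omega, had⟩
  intro s
  have hU : sumset n a s = sumsetInt n a ((s : ℤ) - 1 + 1) := by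
    rw [sub_add_cancel, sumsetInt_natCast]
  have hBC : sumsetInt n a (s - 1) ∪ (· + d) '' sumsetInt n a (s - 1) ⊆ sumset n a s :=
    hU ▸ Set.union_subset (sumsetInt_subset_succ h0 _) (image_add_sumsetInt_subset hdA _)
  have hD : (· + d) '' sumsetInt n a (s - 2) ⊆
      sumsetInt n a (s - 1) ∩ (· + d) '' sumsetInt n a (s - 1) := by
    have h21 : (s : ℤ) - 2 + 1 = s - 1 := by ring
    have hsub := h21 ▸ sumsetInt_subset_succ h0 ((s : ℤ) - 2)
    exact Set.subset_inter (h21 ▸ image_add_sumsetInt_subset hdA _) (Set.image_mono hsub)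
  rw [ncard_APs hd hle, ncard_Es hd hle h0, ncard_diff_union_sub_ncard_inter_diff
    (finite_sumset hle s) hBC hD, Set.ncard_image_of_injective _ (add_left_injective d),
    Set.ncard_image_of_injective _ (add_left_injective d)]
  simp only [nAZ_eq_ncard_sumsetInt, sumsetInt_natCast]
  ring

/-- For all `s ∈ ℕ`, `|AP_s| - |E_s| = |sA| - 2|(s-1)A| + |(s-2)A|`,
with the convention `|sA| = 0` for `s < 0`. -/
theorem levels_apsE (n d : ℕ) (a : ℕ → ℕ)
    (hn : 4 ≤ n)
    (ha0 : a 0 = 0)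
    (had : a (n - 1) = d)
    (hmono : ∀ i j, i < j → j ≤ n - 1 → a i < a j)
    (hgcd : (Finset.Icc 1 (n - 1)).gcd a = 1) :
    ∀ s : ℕ,
      ((APs n d a s).ncard : ℤ) - ((Es n d a s).ncard : ℤ)
        = nAZ n a (s : ℤ) - 2 * nAZ n a ((s : ℤ) - 1) + nAZ n a ((s : ℤ) - 2) :=
  levels_apsE_general n d a hn ha0 had hmono

end SumsetsCurve
end
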